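/- Let φ(x) = (1 − |x − x₀|/h₀)₊ · e^{x²/(2T)} on ℝ, where h₀, T > 0 and x₀ ∈ ℝ. Then φ satisfies |φ(x) − φ(y)| ≤ C₁(1 + φ(x) + φ(y))|x − y| for some constant C₁ > 0, but φ is not continuously differentiable on ℝ. -/

import Mathlib

/-!
The function is `φ = tent x₀ h₀ · g` with `g x = exp (x² / (2T))`. The tent is Lipschitz and
supported in the compact interval `[x₀ - h₀, x₀ + h₀]`, on which the smooth factor `g` is bounded
and Lipschitz; hence `φ` is globally Lipschitz, which is stronger than the growth condition since
`φ ≥ 0`. On the other hand `g` never vanishes, so if `φ` were differentiable at `x₀` then so would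
be `φ / g = tent x₀ h₀`, which coincides with `1 - |x - x₀| / h₀` near `x₀`.
-/

open Real Function Metric NNReal

theorem LipschitzWith.mul_of_support_subset {α : Type*} [PseudoMetricSpace α] {f g : α → ℝ}
    {s : Set α} {Kf Kg A B : ℝ≥0} (hf : LipschitzWith Kf f) (hfs : support f ⊆ s)
    (hfA : ∀ x ∈ s, |f x| ≤ A) (hg : LipschitzOnWith Kg g s) (hgB : ∀ x ∈ s, |g x| ≤ B) :
    LipschitzWith (B * Kf + A * Kg) fun x => f x * g x := by
  have hf_zero : ∀ y ∉ s, f y = 0 := fun y hy => notMem_support.1 (mt (@hfs y) hy)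
  have key : ∀ x y, x ∈ s → dist (f x * g x) (f y * g y) ≤ (B * Kf + A * Kg) * dist x y := by
    intro x y hx
    have h₁ : |(f x - f y) * g x| ≤ Kf * dist x y * B := by
      rw [abs_mul, ← Real.dist_eq]
      exact mul_le_mul (hf.dist_le_mul x y) (hgB x hx) (abs_nonneg _) (by positivity)
    have h₂ : |f y * (g x - g y)| ≤ A * (Kg * dist x y) := by
      by_cases hy : y ∈ s
      · rw [abs_mul, ← Real.dist_eq]
        exact mul_le_mul (hfA y hy) (hg.dist_le_mul x hx y hy) (abs_nonneg _) (by positivity)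
      · rw [hf_zero y hy, zero_mul, abs_zero]
        positivity
    calc dist (f x * g x) (f y * g y) = |(f x - f y) * g x + f y * (g x - g y)| := by
          rw [Real.dist_eq]; ring_nf
      _ ≤ |(f x - f y) * g x| + |f y * (g x - g y)| := abs_add_le _ _
      _ ≤ (B * Kf + A * Kg) * dist x y := by linarith
  refine LipschitzWith.of_dist_le_mul fun x y => ?_
  by_cases hx : x ∈ s
  · exact key x y hx
  by_cases hy : y ∈ s
  · rw [dist_comm, dist_comm x]
    exact key y x hy
  rw [hf_zero x hx, hf_zero y hy, zero_mul, zero_mul, dist_self]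
  positivity

theorem LipschitzWith.exists_lipschitzWith_mul_of_contDiff {E : Type*} [NormedAddCommGroup E]
    [NormedSpace ℝ E] {f g : E → ℝ} {s : Set E} {Kf : ℝ≥0} (hf : LipschitzWith Kf f)
    (hfs : support f ⊆ s) (hs : Convex ℝ s) (hs' : IsCompact s) (hg : ContDiff ℝ 1 g) :
    ∃ K, LipschitzWith K fun x => f x * g x := by
  obtain ⟨Kg, hKg⟩ := hg.contDiffOn.exists_lipschitzOnWith one_ne_zero hs hs'
  obtain ⟨A, hA⟩ := hs'.exists_bound_of_continuousOn hf.continuous.continuousOn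
  obtain ⟨B, hB⟩ := hs'.exists_bound_of_continuousOn hg.continuous.continuousOn
  exact ⟨_, hf.mul_of_support_subset (A := A.toNNReal) (B := B.toNNReal) hfs
    (fun x hx => (hA x hx).trans (le_coe_toNNReal A)) hKg
    (fun x hx => (hB x hx).trans (le_coe_toNNReal B))⟩

theorem LipschitzWith.exists_dist_le_mul_one_add_add {α : Type*} [PseudoMetricSpace α]
    {f : α → ℝ} {K : ℝ≥0} (hf : LipschitzWith K f) (hf₀ : ∀ x, 0 ≤ f x) :
    ∃ C > 0, ∀ x y, dist (f x) (f y) ≤ C * (1 + f x + f y) * dist x y := by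
  refine ⟨K + 1, by positivity, fun x y => (hf.dist_le_mul x y).trans ?_⟩
  gcongr
  calc (K : ℝ) ≤ K + 1 := by linarith
    _ ≤ (K + 1) * (1 + f x + f y) :=
      le_mul_of_one_le_right (by positivity) (by linarith [hf₀ x, hf₀ y])

noncomputable def tent (x₀ h₀ x : ℝ) : ℝ := max (1 - |x - x₀| / h₀) 0

section tent

variable {x₀ h₀ : ℝ}

theorem tent_nonneg (x : ℝ) : 0 ≤ tent x₀ h₀ x := le_max_right _ _

theorem lipschitzWith_tent (hh₀ : 0 < h₀) : LipschitzWith h₀⁻¹.toNNReal (tent x₀ h₀) := by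
  refine LipschitzWith.of_le_add_mul' _ fun x y =>
    max_le ?_ (add_nonneg (tent_nonneg y) (by positivity))
  have h : |y - x₀| - |x - x₀| ≤ dist x y := by
    rw [Real.dist_eq, abs_sub_comm x y]
    simpa only [sub_sub_sub_cancel_right] using abs_sub_abs_le_abs_sub (y - x₀) (x - x₀)
  calc 1 - |x - x₀| / h₀ = 1 - |y - x₀| / h₀ + h₀⁻¹ * (|y - x₀| - |x - x₀|) := by ring
    _ ≤ tent x₀ h₀ y + h₀⁻¹ * dist x y := by
      gcongr
      exact le_max_left _ _

theorem support_tent_subset (hh₀ : 0 < h₀) : support (tent x₀ h₀) ⊆ closedBall x₀ h₀ := by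
  intro x hx
  rw [mem_closedBall, Real.dist_eq]
  by_contra! h
  refine hx (max_eq_right ?_)
  linarith [(one_le_div hh₀).2 h.le]

theorem tent_eventuallyEq (hh₀ : 0 < h₀) :
    tent x₀ h₀ =ᶠ[nhds x₀] fun x => 1 - |x - x₀| / h₀ := by
  filter_upwards [ball_mem_nhds x₀ hh₀] with x hx
  rw [mem_ball, Real.dist_eq] at hx
  exact max_eq_left (by linarith [(div_lt_one hh₀).2 hx])

theorem not_differentiableAt_tent (hh₀ : 0 < h₀) : ¬ DifferentiableAt ℝ (tent x₀ h₀) x₀ := by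
  intro h
  have habs : DifferentiableAt ℝ (fun x => |x - x₀|) x₀ := by
    have h' := (((tent_eventuallyEq hh₀).differentiableAt_iff.1 h).const_sub 1).const_mul h₀
    refine h'.congr_of_eventuallyEq (Filter.Eventually.of_forall fun x => ?_)
    field_simp
    ring
  rw [differentiableAt_comp_sub_const, sub_self] at habs
  exact not_differentiableAt_abs_zero habs

end tent

theorem stmt_13_general (h₀ T x₀ : ℝ) (hh₀ : 0 < h₀) :
    let φ : ℝ → ℝ := fun x => max (1 - |x - x₀| / h₀) 0 * Real.exp (x ^ 2 / (2 * T))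
    (∃ C₁ : ℝ, 0 < C₁ ∧ ∀ x y, |φ x - φ y| ≤ C₁ * (1 + φ x + φ y) * |x - y|) ∧
    ¬ ContDiff ℝ 1 φ := by
  intro φ
  have hg : ContDiff ℝ 1 fun x : ℝ => Real.exp (x ^ 2 / (2 * T)) := by fun_prop
  constructor
  · obtain ⟨K, hK⟩ := (lipschitzWith_tent (x₀ := x₀) hh₀).exists_lipschitzWith_mul_of_contDiff
      (support_tent_subset hh₀) (convex_closedBall _ _) (isCompact_closedBall _ _) hg
    obtain ⟨C, hC, hφ⟩ := hK.exists_dist_le_mul_one_add_add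
      fun x => mul_nonneg (tent_nonneg x) (exp_pos _).le
    refine ⟨C, hC, fun x y => ?_⟩
    rw [← Real.dist_eq, ← Real.dist_eq]
    exact hφ x y
  · intro hφ
    refine not_differentiableAt_tent (x₀ := x₀) hh₀ ?_
    have h := ((hφ.differentiable one_ne_zero).differentiableAt (x := x₀)).div
      (hg.differentiable one_ne_zero x₀) (exp_pos _).ne'
    refine h.congr_of_eventuallyEq (Filter.Eventually.of_forall fun x => ?_)
    exact (mul_div_cancel_right₀ _ (exp_pos _).ne').symm

/-- The function `φ(x) = (1 − |x − x₀|/h₀)₊ e^{x²/(2T)}` satisfies the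
growth-Lipschitz condition (A4) but is not continuously differentiable. -/
theorem stmt_13 (h₀ T x₀ : ℝ) (hh₀ : 0 < h₀) (hT : 0 < T) :
    let φ : ℝ → ℝ := fun x => max (1 - |x - x₀| / h₀) 0 * Real.exp (x ^ 2 / (2 * T))
    (∃ C₁ : ℝ, 0 < C₁ ∧ ∀ x y, |φ x - φ y| ≤ C₁ * (1 + φ x + φ y) * |x - y|) ∧
    ¬ ContDiff ℝ 1 φ :=
  stmt_13_general h₀ T x₀ hh₀
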